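/- arXiv:1506.00944 — 3 statements merged into one kernel-verified Lean document; each statement's English description precedes it below -/
import Mathlib

section
/- Let ℓ ≥ 2, let k ≥ 0 be an integer, and let G be a finite simple graph none of whose connected components is a clique or an ℓ-clique. Let M be a twin class of G of size at least 2 whose vertices are pairwise false twins (a P-vertex of G_Q), and let F be an edition set for G with |F| ≤ k such that G+F is an L-cluster graph and such that every vertex of M lies in a connected component of G+F that is a clique. Then |M| ≤ k+1. -/
open SimpleGraph

variable {V : Type*}

/-- The graph obtained from `G` by applying the edition set `F`
(symmetric difference of the edge set with `F`). -/
def editGraph (G : SimpleGraph V) (F : Finset (Sym2 V)) : SimpleGraph V :=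
  SimpleGraph.fromEdgeSet (symmDiff G.edgeSet (F : Set (Sym2 V)))

/-- An edition set is a finite set of unordered pairs of *distinct* vertices. -/
def IsEditionSet (F : Finset (Sym2 V)) : Prop := ∀ e ∈ F, ¬ e.IsDiag

/-- `S` induces in `G` an `ℓ`-clique: a connected complete (at most) `ℓ`-partite graph,
i.e. `S` splits into at most `ℓ` independent sets with all edges present between
different parts, and the induced subgraph is connected. -/
def IsEllCliqueOn (ℓ : ℕ) (G : SimpleGraph V) (S : Set V) : Prop :=
  (G.induce S).Connected ∧
  ∃ f : V → Fin ℓ, ∀ x ∈ S, ∀ y ∈ S, x ≠ y → (G.Adj x y ↔ f x ≠ f y)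

/-- A cluster graph: every connected component is a clique. -/
def IsCluster (G : SimpleGraph V) : Prop :=
  ∀ c : G.ConnectedComponent, G.IsClique c.supp

/-- A `K_ℓ`-cluster graph: every connected component is an `ℓ`-clique. -/
def IsKlCluster (ℓ : ℕ) (G : SimpleGraph V) : Prop :=
  ∀ c : G.ConnectedComponent, IsEllCliqueOn ℓ G c.supp

/-- An `L`-cluster graph: every connected component is a clique or an `ℓ`-clique. -/
def IsLCluster (ℓ : ℕ) (G : SimpleGraph V) : Prop :=
  ∀ c : G.ConnectedComponent, G.IsClique c.supp ∨ IsEllCliqueOn ℓ G c.supp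

/-- `G` contains an induced subgraph isomorphic to `H`. -/
def Contains {W : Type*} (H : SimpleGraph W) (G : SimpleGraph V) : Prop :=
  Nonempty (H ↪g G)

/-- The paw: a triangle with a pendant vertex (the complement of `P3 ∪ K1`). -/
def paw : SimpleGraph (Fin 4) :=
  SimpleGraph.fromEdgeSet {s(0,1), s(0,2), s(1,2), s(0,3)}

/-- The complete graph on `ℓ + 2` vertices minus one edge. -/
def completeMinusEdge (ℓ : ℕ) : SimpleGraph (Fin (ℓ + 2)) where
  Adj x y := x ≠ y ∧ s(x,y) ≠ s((0 : Fin (ℓ + 2)), 1)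
  symm := ⟨by
    rintro x y ⟨h1, h2⟩
    exact ⟨h1.symm, by rwa [Sym2.eq_swap]⟩⟩
  loopless := ⟨fun x h => h.1 rfl⟩

/-- The graph `G̃` on `V × {1,…,ℓ}`: `(u,p)` is adjacent to `(v,q)` iff `p ≠ q` and
(`u = v` or `uv ∈ E(G)`). -/
def tilde (ℓ : ℕ) (G : SimpleGraph V) : SimpleGraph (V × Fin ℓ) where
  Adj a b := a.2 ≠ b.2 ∧ (a.1 = b.1 ∨ G.Adj a.1 b.1)
  symm := ⟨fun _ _ h => ⟨h.1.symm, h.2.imp Eq.symm (fun h' => h'.symm)⟩⟩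
  loopless := ⟨fun _ h => h.1 rfl⟩

/-- `x` and `y` are twins in `G`: they are distinct and every other vertex is adjacent
to `x` iff it is adjacent to `y`. -/
def IsTwinPair (G : SimpleGraph V) (x y : V) : Prop :=
  x ≠ y ∧ ∀ z, z ≠ x → z ≠ y → (G.Adj z x ↔ G.Adj z y)

/-- The twin class of a vertex. -/
def twinClass (G : SimpleGraph V) (v : V) : Set V :=
  {w | w = v ∨ IsTwinPair G v w}

/-- The set of twin classes of `G`. -/
def twinClasses (G : SimpleGraph V) : Set (Set V) :=
  Set.range (twinClass G)

/-- The number of U-vertices of `G_Q` (singleton twin classes). -/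
noncomputable def Ucount (G : SimpleGraph V) : ℕ :=
  {C ∈ twinClasses G | C.Subsingleton}.ncard

/-- The number of P-vertices of `G_Q` (twin classes of size ≥ 2 of pairwise false twins). -/
noncomputable def Pcount (G : SimpleGraph V) : ℕ :=
  {C ∈ twinClasses G | 2 ≤ C.ncard ∧ ∀ x ∈ C, ∀ y ∈ C, x ≠ y → ¬ G.Adj x y}.ncard

/-- The number of S-vertices of `G_Q` (twin classes of size ≥ 2 of pairwise true twins). -/
noncomputable def Scount (G : SimpleGraph V) : ℕ :=
  {C ∈ twinClasses G | 2 ≤ C.ncard ∧ ∀ x ∈ C, ∀ y ∈ C, x ≠ y → G.Adj x y}.ncard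

/-- The total number of twin classes of `G` (vertices of the Q-quotient graph `G_Q`). -/
noncomputable def Qcount (G : SimpleGraph V) : ℕ :=
  (twinClasses G).ncard

/-- The edition set `F̃ = { {(u,p),(v,q)} : {u,v} ∈ F, p ≠ q }` on `V × {1,…,ℓ}`. -/
def liftEdition [Fintype V] [DecidableEq V] (ℓ : ℕ) (F : Finset (Sym2 V)) :
    Finset (Sym2 (V × Fin ℓ)) :=
  Finset.univ.filter (fun e => ∃ (u v : V) (p q : Fin ℓ),
    p ≠ q ∧ s(u,v) ∈ F ∧ e = s((u,p),(v,q)))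

/-! Some vertex `v ∈ M` has a neighbour `w`, as otherwise the component of `v` would be the clique
`{v}`; then `w ∉ M` and, by twinness, `w` is adjacent to all of `M`. Let `C` be the component of
`w` in `G + F` and fix `a ∈ M`, inside `C` if possible. Every other `x ∈ M` is charged to an edit:
the pair `{x, a}`, which must be inserted if `x ∈ C` because `C` is a clique and `M` is
independent, and otherwise the edge `{x, w}`, which must have been deleted. These charges are
distinct, so `|M| - 1 ≤ |F|`. -/

theorem Set.ncard_le_card_add_one_of_injOn {α β : Type*} {s : Set α} {t : Finset β} {a : α}
    (f : α → β) (hf : ∀ x ∈ s \ {a}, f x ∈ t) (hinj : Set.InjOn f (s \ {a})) :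
    s.ncard ≤ t.card + 1 :=
  calc s.ncard ≤ (s \ {a}).ncard + ({a} : Set α).ncard := Set.ncard_le_ncard_sdiff_add_ncard _ _
    _ ≤ t.card + 1 := by
      gcongr
      · simpa using Set.ncard_le_ncard_of_injOn f hf hinj
      · simp

namespace SimpleGraph

variable {G : SimpleGraph V} {F : Finset (Sym2 V)} {x y : V}

theorem IsIsolated.eq_of_reachable {v z : V} (hv : G.IsIsolated v) (h : G.Reachable v z) :
    z = v := by
  obtain ⟨p⟩ := h
  cases p with
  | nil => rfl
  | cons hadj _ => exact absurd hadj (hv _)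

theorem IsIsolated.isClique_supp {v : V} (hv : G.IsIsolated v) :
    G.IsClique (G.connectedComponentMk v).supp :=
  IsClique.of_subsingleton fun _ hx _ hy =>
    (hv.eq_of_reachable (ConnectedComponent.exact hx).symm).trans
      (hv.eq_of_reachable (ConnectedComponent.exact hy).symm).symm

theorem adj_iff_of_mem_twinClass {v x w : V} (hx : x ∈ twinClass G v)
    (hw : w ∉ twinClass G v) : G.Adj w x ↔ G.Adj w v := by
  rcases hx with rfl | htwin
  · rfl
  · exact (htwin.2 w (fun h => hw (Or.inl h)) (fun h => hw (h ▸ Or.inr htwin))).symm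

theorem mk_mem_of_adj_editGraph (hH : (editGraph G F).Adj x y) (hG : ¬G.Adj x y) :
    s(x, y) ∈ F := by
  rw [editGraph, fromEdgeSet_adj, Set.mem_symmDiff] at hH
  exact hH.1.elim (fun h => absurd h.1 hG) (·.1)

theorem mk_mem_of_not_adj_editGraph (hG : G.Adj x y) (hH : ¬(editGraph G F).Adj x y) :
    s(x, y) ∈ F := by
  by_contra hF
  exact hH (fromEdgeSet_adj _ |>.2 ⟨Set.mem_symmDiff.2 (Or.inl ⟨hG, hF⟩), hG.ne⟩)

theorem IsIndepSet.ncard_le_card_add_one_of_forall_adj {M : Set V} {w : V} (hM : G.IsIndepSet M)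
    (hw : ∀ x ∈ M, G.Adj w x)
    (hcl : ∀ x ∈ M, (editGraph G F).IsClique ((editGraph G F).connectedComponentMk x).supp) :
    M.ncard ≤ F.card + 1 := by
  classical
  set H := editGraph G F
  set C := H.connectedComponentMk w
  have hwM : w ∉ M := fun h => (hw w h).ne rfl
  rcases M.eq_empty_or_nonempty with rfl | ⟨b, hb⟩
  · simp
  obtain ⟨a, haM, haC⟩ : ∃ a ∈ M, (∃ x ∈ M, x ∈ C.supp) → a ∈ C.supp := by
    by_cases h : ∃ x ∈ M, x ∈ C.supp
    · obtain ⟨a, haM, haC⟩ := h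
      exact ⟨a, haM, fun _ => haC⟩
    · exact ⟨b, hb, fun h' => absurd h' h⟩
  have hne : ∀ x ∈ M, ∀ y, s(x, a) ≠ s(y, w) := fun x hx y h => by
    rcases Sym2.mem_iff.1 (h ▸ Sym2.mem_mk_right y w : w ∈ s(x, a)) with rfl | rfl
    exacts [hwM hx, hwM haM]
  refine Set.ncard_le_card_add_one_of_injOn (a := a)
    (fun x => if x ∈ C.supp then s(x, a) else s(x, w)) ?_ ?_
  · rintro x ⟨hxM, hxa⟩
    by_cases hxC : x ∈ C.supp
    · rw [if_pos hxC]
      have hcliq := hcl x hxM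
      rw [(ConnectedComponent.mem_supp_iff _ _).1 hxC] at hcliq
      exact mk_mem_of_adj_editGraph (hcliq hxC (haC ⟨x, hxM, hxC⟩) hxa)
        (hM hxM haM hxa)
    · rw [if_neg hxC]
      exact mk_mem_of_not_adj_editGraph (hw x hxM).symm
        fun hadj => hxC (ConnectedComponent.sound hadj.reachable)
  · rintro x ⟨hxM, -⟩ y ⟨hyM, -⟩ hxy
    dsimp only at hxy
    split_ifs at hxy
    · exact Sym2.congr_left.1 hxy
    · exact absurd hxy (hne x hxM y)
    · exact absurd hxy.symm (hne y hyM x)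
    · exact Sym2.congr_left.1 hxy

end SimpleGraph

theorem pVertex_split_into_cliques_general (ℓ k : ℕ)
    (G : SimpleGraph V)
    (hG : ∀ c : G.ConnectedComponent,
      ¬ (G.IsClique c.supp ∨ IsEllCliqueOn ℓ G c.supp))
    (M : Set V) (hM : ∃ v, M = twinClass G v)
    (hindep : ∀ x ∈ M, ∀ y ∈ M, x ≠ y → ¬ G.Adj x y)
    (F : Finset (Sym2 V)) (hk : F.card ≤ k)
    (hcl : ∀ v ∈ M, (editGraph G F).IsClique
      ((editGraph G F).connectedComponentMk v).supp) :
    M.ncard ≤ k + 1 := by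
  obtain ⟨v, rfl⟩ := hM
  obtain ⟨w, hvw⟩ : ∃ w, G.Adj v w :=
    exists_adj_iff_not_isIsolated.2 fun hv => hG _ (Or.inl hv.isClique_supp)
  have hw : w ∉ twinClass G v := fun hw => hindep v (Or.inl rfl) w hw hvw.ne hvw
  have hw_adj : ∀ x ∈ twinClass G v, G.Adj w x := fun x hx =>
    (adj_iff_of_mem_twinClass hx hw).2 hvw.symm
  exact (IsIndepSet.ncard_le_card_add_one_of_forall_adj hindep hw_adj hcl).trans (by omega)

/-- If `G` has no clique or `ℓ`-clique component, `M` is a P-vertex (twin class of size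
≥ 2 of pairwise false twins), and an `L`-cluster-editing set `F` with `|F| ≤ k` places
every vertex of `M` into a clique component of `G + F`, then `|M| ≤ k + 1`. -/
theorem pVertex_split_into_cliques [Fintype V] (ℓ k : ℕ) (hℓ : 2 ≤ ℓ)
    (G : SimpleGraph V)
    (hG : ∀ c : G.ConnectedComponent,
      ¬ (G.IsClique c.supp ∨ IsEllCliqueOn ℓ G c.supp))
    (M : Set V) (hM : ∃ v, M = twinClass G v) (hsize : 2 ≤ M.ncard)
    (hindep : ∀ x ∈ M, ∀ y ∈ M, x ≠ y → ¬ G.Adj x y)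
    (F : Finset (Sym2 V)) (hF : IsEditionSet F) (hk : F.card ≤ k)
    (hL : IsLCluster ℓ (editGraph G F))
    (hcl : ∀ v ∈ M, (editGraph G F).IsClique
      ((editGraph G F).connectedComponentMk v).supp) :
    M.ncard ≤ k + 1 :=
  pVertex_split_into_cliques_general ℓ k G hG M hM hindep F hk hcl
end

section
/- Let ℓ ≥ 2, let k ≥ 0 be an integer, and let G be a finite simple graph none of whose connected components is a clique or an ℓ-clique. Let M be a twin class of G of size at least 2 whose vertices are pairwise false twins (a P-vertex of G_Q), and let F be an edition set of minimum size among all edition sets F' for which G+F' is an L-cluster graph, with |F| ≤ k. Suppose that in G+F the vertices of M are distributed among exactly one connected component that is an ℓ-clique but not a clique and one or more connected components that are cliques of size at least two. Then |M| ≤ k. -/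
open SimpleGraph

variable {V : Type*}

/-!
All vertices of `M` have the same nonempty neighbourhood `N` in `G`. If every vertex of `M` has
an edit leaving `M`, these edits inject `M` into `F`. Otherwise some `d ∈ M` has all its edits
inside `M`, and then `N` lies in the component of `d` in `G + F`.

If that component is the `ℓ`-clique `c₀`, drop every edit at `M` and put all of `M` into the
colour class of `d` in `c₀`: the result is again an `L`-cluster graph, so by minimality `F` has no
edit at `M`, and every vertex of `M` is adjacent to `N ⊆ c₀`, although `M` meets another
component.

If it is a clique `S`, then `d` is joined by edits to the rest of `M ∩ S`, every vertex of `M`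
outside `S` by an edit to a fixed `y₀ ∈ N`, and a neighbour of `m₁ ∈ M ∩ c₀` in `c₀` provides a
further edit for `d`.
-/

lemma ncard_le_card_of_injOn {α β : Type*} {M : Set α} {F : Finset β} (φ : α → β)
    (hφ : ∀ m ∈ M, φ m ∈ F) (hinj : Set.InjOn φ M) : M.ncard ≤ F.card := by
  simpa using Set.ncard_le_ncard_of_injOn φ hφ hinj F.finite_toSet

section Components

variable {H : SimpleGraph V}

lemma exists_adj_of_not_isClique_supp {c : H.ConnectedComponent} {v : V} (hv : v ∈ c.supp)
    (h : ¬ H.IsClique c.supp) : ∃ w, H.Adj v w := by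
  by_contra! hno
  have hsupp : ∀ x ∈ c.supp, x = v := fun x hx => by
    by_contra hne
    obtain ⟨p⟩ := c.reachable_of_mem_supp hv hx
    exact hno _ (p.adj_snd (Walk.not_nil_of_ne (Ne.symm hne)))
  exact h fun x hx y hy hxy => absurd ((hsupp x hx).trans (hsupp y hy).symm) hxy

lemma connectedComponentMk_supp_subset {S : Set V} {x : V} (hx : x ∈ S)
    (hS : ∀ a ∈ S, ∀ b, H.Adj a b → b ∈ S) : (H.connectedComponentMk x).supp ⊆ S := by
  intro y hy
  obtain ⟨p⟩ := ConnectedComponent.exact hy.symm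
  induction p with
  | nil => exact hx
  | cons h _ ih =>
    exact ih (hS _ hx _ h) (ConnectedComponent.connectedComponentMk_eq_of_adj h ▸ hy)

end Components

/-- The colouring half of `IsEllCliqueOn`. -/
def IsMultipartiteOn (ℓ : ℕ) (H : SimpleGraph V) (S : Set V) : Prop :=
  ∃ f : V → Fin ℓ, ∀ x ∈ S, ∀ y ∈ S, x ≠ y → (H.Adj x y ↔ f x ≠ f y)

section Pieces

variable {ℓ : ℕ} {H H' : SimpleGraph V} {S T : Set V}

lemma IsMultipartiteOn.of_subset (h : IsMultipartiteOn ℓ H S) (hTS : T ⊆ S)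
    (hagree : ∀ x ∈ T, ∀ y ∈ T, H'.Adj x y ↔ H.Adj x y) : IsMultipartiteOn ℓ H' T := by
  obtain ⟨f, hf⟩ := h
  exact ⟨f, fun x hx y hy hxy => (hagree x hx y hy).trans (hf x (hTS hx) y (hTS hy) hxy)⟩

lemma SimpleGraph.IsClique.of_subset (h : H.IsClique S) (hTS : T ⊆ S)
    (hagree : ∀ x ∈ T, ∀ y ∈ T, H'.Adj x y ↔ H.Adj x y) : H'.IsClique T :=
  fun x hx y hy hxy => (hagree x hx y hy).2 (h (hTS hx) (hTS hy) hxy)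

/-- Connectivity need not be checked: it comes for free from the components. -/
lemma isLCluster_of_forall_exists
    (h : ∀ x, ∃ S, x ∈ S ∧ (∀ a ∈ S, ∀ b, H.Adj a b → b ∈ S) ∧
      (H.IsClique S ∨ IsMultipartiteOn ℓ H S)) :
    IsLCluster ℓ H := by
  intro c
  induction c using ConnectedComponent.ind with
  | h x =>
    obtain ⟨S, hxS, hS, hpiece⟩ := h x
    have hsub := connectedComponentMk_supp_subset hxS hS
    refine hpiece.imp (fun hcl => hcl.subset hsub) fun hmul => ⟨?_, ?_⟩
    · exact ConnectedComponent.connected_toSimpleGraph _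
    · exact hmul.of_subset hsub fun _ _ _ _ => Iff.rfl

lemma IsLCluster.cliqueOrMultipartite_of_subset (hL : IsLCluster ℓ H) (x : V)
    (hT : T ⊆ (H.connectedComponentMk x).supp)
    (hagree : ∀ a ∈ T, ∀ b ∈ T, H'.Adj a b ↔ H.Adj a b) :
    H'.IsClique T ∨ IsMultipartiteOn ℓ H' T :=
  (hL _).imp (fun hcl => hcl.of_subset hT hagree) fun hell =>
    IsMultipartiteOn.of_subset hell.2 hT hagree

/-- The vertices of `A` join the colour class `i` of `c`; every other component of `H` only
loses the vertices of `A`. -/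
theorem isLCluster_of_attach {A N : Set V} {c : H.ConnectedComponent} {f : V → Fin ℓ}
    {i : Fin ℓ} (hL : IsLCluster ℓ H)
    (hagree : ∀ x y, x ∉ A → y ∉ A → (H'.Adj x y ↔ H.Adj x y))
    (hA : ∀ a ∈ A, ∀ y, H'.Adj a y ↔ y ∈ N) (hNc : N ⊆ c.supp)
    (hf : ∀ x ∈ c.supp, ∀ y ∈ c.supp, x ≠ y → (H.Adj x y ↔ f x ≠ f y))
    (hi : ∀ x ∈ c.supp, x ∉ A → (x ∈ N ↔ f x ≠ i)) :
    IsLCluster ℓ H' := by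
  classical
  have hAN : ∀ a ∈ A, a ∉ N := fun a ha hN => H'.irrefl ((hA a ha a).2 hN)
  refine isLCluster_of_forall_exists fun x => ?_
  by_cases hx : x ∈ c.supp ∪ A
  · refine ⟨c.supp ∪ A, hx, ?_, Or.inr ⟨fun y => if y ∈ A then i else f y, ?_⟩⟩
    · intro a ha b hab
      by_cases hbA : b ∈ A
      · exact Or.inr hbA
      by_cases haA : a ∈ A
      · exact Or.inl (hNc ((hA a haA b).1 hab))
      · exact Or.inl (c.mem_supp_of_adj_mem_supp (ha.resolve_right haA)
          ((hagree a b haA hbA).1 hab))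
    · intro a ha b hb hab
      by_cases haA : a ∈ A <;> by_cases hbA : b ∈ A <;> simp only [haA, hbA, if_true, if_false]
      · exact iff_of_false (fun h => hAN b hbA ((hA a haA b).1 h)) (· rfl)
      · rw [hA a haA b, hi b (hb.resolve_right hbA) hbA, ne_comm]
      · rw [H'.adj_comm, hA b hbA a, hi a (ha.resolve_right haA) haA]
      · rw [hagree a b haA hbA]
        exact hf a (ha.resolve_right haA) b (hb.resolve_right hbA) hab
  · have hxc : x ∉ c.supp := fun h => hx (Or.inl h)
    refine ⟨(H.connectedComponentMk x).supp \ A, ⟨rfl, fun h => hx (Or.inr h)⟩, ?_, ?_⟩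
    · rintro a ⟨hax, haA⟩ b hab
      by_cases hbA : b ∈ A
      · exact absurd (hNc ((hA b hbA a).1 hab.symm)) fun h => hxc (hax.symm.trans h)
      · exact ⟨(H.connectedComponentMk x).mem_supp_of_adj_mem_supp hax
          ((hagree a b haA hbA).1 hab), hbA⟩
    · exact hL.cliqueOrMultipartite_of_subset x Set.sdiff_subset
        fun a ha b hb => hagree a b ha.2 hb.2

end Pieces

section Editing

variable {G : SimpleGraph V} {F : Finset (Sym2 V)} {x y : V}

lemma editGraph_adj_of_notMem (h : s(x, y) ∉ F) : (editGraph G F).Adj x y ↔ G.Adj x y := by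
  simp only [editGraph, fromEdgeSet_adj, Set.mem_symmDiff, Finset.mem_coe, mem_edgeSet, h]
  exact ⟨fun h => h.1.elim (·.1) (·.1.elim), fun hxy => ⟨Or.inl ⟨hxy, id⟩, hxy.ne⟩⟩

open Classical in
noncomputable def editsAvoiding (F : Finset (Sym2 V)) (A : Set V) : Finset (Sym2 V) :=
  F.filter fun e => ∀ x ∈ e, x ∉ A

variable {A : Set V}

lemma mem_editsAvoiding {e : Sym2 V} :
    e ∈ editsAvoiding F A ↔ e ∈ F ∧ ∀ x ∈ e, x ∉ A := by
  classical
  simp [editsAvoiding]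

lemma editsAvoiding_ssubset {a w : V} (ha : a ∈ A) (h : s(a, w) ∈ F) :
    editsAvoiding F A ⊂ F := by
  classical
  exact Finset.filter_ssubset.2 ⟨_, h, fun hA => hA a (Sym2.mem_mk_left a w) ha⟩

lemma editGraph_editsAvoiding_adj_of_notMem (hx : x ∉ A) (hy : y ∉ A) :
    (editGraph G (editsAvoiding F A)).Adj x y ↔ (editGraph G F).Adj x y := by
  have : s(x, y) ∈ editsAvoiding F A ↔ s(x, y) ∈ F := by
    simp only [mem_editsAvoiding, Sym2.mem_iff, and_iff_left_iff_imp]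
    rintro - z (rfl | rfl) <;> assumption
  simp only [editGraph, fromEdgeSet_adj, Set.mem_symmDiff, Finset.mem_coe, this]

lemma editGraph_editsAvoiding_adj_of_mem (hx : x ∈ A) :
    (editGraph G (editsAvoiding F A)).Adj x y ↔ G.Adj x y :=
  editGraph_adj_of_notMem fun h => (mem_editsAvoiding.1 h).2 x (Sym2.mem_mk_left x y) hx

end Editing

/-- `M` is independent and disjoint from `N`, since `G` has no loops. -/
def IsFalseTwinSet (G : SimpleGraph V) (M N : Set V) : Prop :=
  ∀ m ∈ M, ∀ w, G.Adj m w ↔ w ∈ N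

def EditsWithin (F : Finset (Sym2 V)) (M : Set V) (m : V) : Prop :=
  ∀ w, s(m, w) ∈ F → w ∈ M

lemma IsTwinPair.adj_iff_of_not_adj {G : SimpleGraph V} {x y : V} (h : IsTwinPair G x y)
    (hxy : ¬ G.Adj x y) (w : V) : G.Adj y w ↔ G.Adj x w := by
  by_cases hwx : w = x
  · subst hwx
    exact iff_of_false (fun h' => hxy h'.symm) G.irrefl
  by_cases hwy : w = y
  · subst hwy
    exact iff_of_false G.irrefl hxy
  rw [G.adj_comm, G.adj_comm x, h.2 w hwx hwy]

lemma isFalseTwinSet_twinClass {G : SimpleGraph V} {v : V}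
    (hindep : ∀ x ∈ twinClass G v, ∀ y ∈ twinClass G v, x ≠ y → ¬ G.Adj x y) :
    IsFalseTwinSet G (twinClass G v) (G.neighborSet v) := by
  rintro m (rfl | hm) w
  · exact Iff.rfl
  · exact hm.adj_iff_of_not_adj (hindep v (Or.inl rfl) m (Or.inr hm) hm.1) w

namespace IsFalseTwinSet

variable {ℓ : ℕ} {G : SimpleGraph V} {M N : Set V} {F : Finset (Sym2 V)} {m : V}

lemma notMem (hM : IsFalseTwinSet G M N) (hm : m ∈ M) : m ∉ N :=
  fun h => G.irrefl ((hM m hm m).2 h)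

lemma editGraph_adj {w : V} (hM : IsFalseTwinSet G M N) (hm : m ∈ M) (h : s(m, w) ∉ F) :
    (editGraph G F).Adj m w ↔ w ∈ N :=
  (editGraph_adj_of_notMem h).trans (hM m hm w)

lemma mem_supp_of_editsWithin (hM : IsFalseTwinSet G M N) (hm : m ∈ M)
    (hmF : EditsWithin F M m) : N ⊆ ((editGraph G F).connectedComponentMk m).supp :=
  fun y hy => ConnectedComponent.mem_supp_of_adj_mem_supp _ rfl
    ((hM.editGraph_adj hm fun h => hM.notMem (hmF y h) hy).2 hy)

theorem notMem_of_attach (hM : IsFalseTwinSet G M N) (hL : IsLCluster ℓ (editGraph G F))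
    (hmin : ∀ F' ⊂ F, ¬ IsLCluster ℓ (editGraph G F')) {A : Set V} (hAM : A ⊆ M)
    {c : (editGraph G F).ConnectedComponent} {f : V → Fin ℓ} {i : Fin ℓ}
    (hNc : N ⊆ c.supp)
    (hf : ∀ x ∈ c.supp, ∀ y ∈ c.supp, x ≠ y → ((editGraph G F).Adj x y ↔ f x ≠ f y))
    (hi : ∀ x ∈ c.supp, x ∉ A → (x ∈ N ↔ f x ≠ i)) {a w : V} (ha : a ∈ A) :
    s(a, w) ∉ F := fun haw =>
  hmin _ (editsAvoiding_ssubset ha haw) <| isLCluster_of_attach hL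
    (fun _ _ hx hy => editGraph_editsAvoiding_adj_of_notMem hx hy)
    (fun a ha y => (editGraph_editsAvoiding_adj_of_mem ha).trans (hM a (hAM ha) y)) hNc hf hi

theorem subset_supp_of_editsWithin (hM : IsFalseTwinSet G M N) (hN : N.Nonempty)
    (hL : IsLCluster ℓ (editGraph G F)) (hmin : ∀ F' ⊂ F, ¬ IsLCluster ℓ (editGraph G F'))
    {c : (editGraph G F).ConnectedComponent} {f : V → Fin ℓ}
    (hf : ∀ x ∈ c.supp, ∀ y ∈ c.supp, x ≠ y → ((editGraph G F).Adj x y ↔ f x ≠ f y))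
    (hm : m ∈ M) (hmc : m ∈ c.supp) (hmF : EditsWithin F M m) : M ⊆ c.supp := by
  have hNc : N ⊆ c.supp := hmc ▸ hM.mem_supp_of_editsWithin hm hmF
  have hi : ∀ x ∈ c.supp, x ∉ M → (x ∈ N ↔ f x ≠ f m) := fun x hx hxM => by
    rw [← hM.editGraph_adj hm fun h => hxM (hmF x h), hf m hmc x hx (ne_of_mem_of_not_mem hm hxM),
      ne_comm]
  obtain ⟨y, hy⟩ := hN
  intro m' hm'
  -- dropping every edit at `M` puts all of `M` into the colour class of `m`
  have hm'y : (editGraph G F).Adj m' y :=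
    (hM.editGraph_adj hm' (hM.notMem_of_attach hL hmin subset_rfl hNc hf hi hm')).2 hy
  exact c.mem_supp_of_adj_mem_supp (hNc hy) hm'y.symm

/-- With `S` the clique component of `d`, the injection is `d ↦ m₁z`, `m ↦ dm` on `M ∩ S` and
`m ↦ my₀` off `S`; `m₁z` is an edit because `z ∉ S ⊇ N`. -/
theorem ncard_le_card_of_editsWithin_isClique (hM : IsFalseTwinSet G M N) {d m₁ z y₀ : V}
    (hd : d ∈ M) (hdF : EditsWithin F M d)
    (hS : (editGraph G F).IsClique ((editGraph G F).connectedComponentMk d).supp)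
    (hy₀ : y₀ ∈ N) (hm₁ : m₁ ∈ M) (hm₁S : m₁ ∉ ((editGraph G F).connectedComponentMk d).supp)
    (hm₁z : (editGraph G F).Adj m₁ z) : M.ncard ≤ F.card := by
  classical
  set S := ((editGraph G F).connectedComponentMk d).supp
  have hdS : d ∈ S := rfl
  have hNS : N ⊆ S := hM.mem_supp_of_editsWithin hd hdF
  have hzS : z ∉ S := fun h => hm₁S (ConnectedComponent.mem_supp_of_adj_mem_supp _ h hm₁z.symm)
  have hy₀M : y₀ ∉ M := fun h => hM.notMem h hy₀
  have hedit_m₁z : s(m₁, z) ∈ F := by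
    by_contra h
    exact hzS (hNS ((hM.editGraph_adj hm₁ h).1 hm₁z))
  have hedit_dm : ∀ m ∈ M, m ∈ S → m ≠ d → s(d, m) ∈ F := fun m hm hmS hmd => by
    by_contra h
    exact hM.notMem hm ((hM.editGraph_adj hd h).1 (hS hdS hmS hmd.symm))
  have hedit_my₀ : ∀ m ∈ M, m ∉ S → s(m, y₀) ∈ F := fun m hm hmS => by
    by_contra h
    exact hmS (ConnectedComponent.mem_supp_of_adj_mem_supp _ (hNS hy₀)
      ((hM.editGraph_adj hm h).2 hy₀).symm)
  refine ncard_le_card_of_injOn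
    (fun m => if m = d then s(m₁, z) else if m ∈ S then s(d, m) else s(m, y₀)) ?_ ?_
  · intro m hm
    split_ifs with hmd hmS
    exacts [hedit_m₁z, hedit_dm m hm hmS hmd, hedit_my₀ m hm hmS]
  · intro a ha b hb hab
    have := hNS hy₀
    dsimp only at hab
    split_ifs at hab <;> simp only [Sym2.eq_iff] at hab <;> grind

end IsFalseTwinSet

lemma ncard_le_card_of_forall_exists_edit_notMem {F : Finset (Sym2 V)} {M : Set V}
    (h : ∀ m ∈ M, ∃ w ∉ M, s(m, w) ∈ F) : M.ncard ≤ F.card := by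
  choose! w hwM hwF using h
  refine ncard_le_card_of_injOn (fun m => s(m, w m)) hwF fun a ha b hb hab => ?_
  rcases Sym2.eq_iff.1 hab with ⟨rfl, -⟩ | ⟨rfl, -⟩
  · rfl
  · exact absurd ha (hwM b hb)

theorem pVertex_split_ellClique_and_cliques_general (ℓ k : ℕ)
    (G : SimpleGraph V)
    (hG : ∀ c : G.ConnectedComponent,
      ¬ (G.IsClique c.supp ∨ IsEllCliqueOn ℓ G c.supp))
    (M : Set V) (hM : ∃ v, M = twinClass G v)
    (hindep : ∀ x ∈ M, ∀ y ∈ M, x ≠ y → ¬ G.Adj x y)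
    (F : Finset (Sym2 V)) (hF : IsEditionSet F) (hk : F.card ≤ k)
    (hL : IsLCluster ℓ (editGraph G F))
    (hmin : ∀ F' : Finset (Sym2 V), IsEditionSet F' →
      IsLCluster ℓ (editGraph G F') → F.card ≤ F'.card)
    (hsplit : ∃ c₀ : (editGraph G F).ConnectedComponent,
      (M ∩ c₀.supp).Nonempty ∧
      IsEllCliqueOn ℓ (editGraph G F) c₀.supp ∧
      ¬ (editGraph G F).IsClique c₀.supp ∧
      (∀ c : (editGraph G F).ConnectedComponent, (M ∩ c.supp).Nonempty → c ≠ c₀ →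
        (editGraph G F).IsClique c.supp ∧ 2 ≤ c.supp.ncard) ∧
      (∃ c : (editGraph G F).ConnectedComponent, c ≠ c₀ ∧ (M ∩ c.supp).Nonempty)) :
    M.ncard ≤ k := by
  obtain ⟨v, rfl⟩ := hM
  have hMN := isFalseTwinSet_twinClass hindep
  have hN : (G.neighborSet v).Nonempty :=
    exists_adj_of_not_isClique_supp ConnectedComponent.connectedComponentMk_mem
      fun h => hG _ (Or.inl h)
  have hmin' : ∀ F' ⊂ F, ¬ IsLCluster ℓ (editGraph G F') := fun F' hF' hL' =>
    (hmin F' (fun e he => hF e (hF'.subset he)) hL').not_gt (Finset.card_lt_card hF')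
  obtain ⟨c₀, ⟨m₁, hm₁, hm₁c⟩, ⟨-, f, hf⟩, hnc, hcl, c, hc, m₂, hm₂, hm₂c⟩ := hsplit
  have hm₂c₀ : m₂ ∉ c₀.supp := fun h => hc (hm₂c.symm.trans h)
  refine le_trans ?_ hk
  by_cases hin : ∃ d ∈ twinClass G v, EditsWithin F (twinClass G v) d
  · obtain ⟨d, hd, hdF⟩ := hin
    by_cases hdc : d ∈ c₀.supp
    · exact absurd (hMN.subset_supp_of_editsWithin hN hL hmin' hf hd hdc hdF hm₂) hm₂c₀
    obtain ⟨z, hz⟩ := exists_adj_of_not_isClique_supp hm₁c hnc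
    exact hMN.ncard_le_card_of_editsWithin_isClique hd hdF
      (hcl _ ⟨d, hd, rfl⟩ hdc).1 hN.some_mem hm₁ (fun h => hdc (h.symm.trans hm₁c)) hz
  refine ncard_le_card_of_forall_exists_edit_notMem fun m hm => ?_
  by_contra! h
  exact hin ⟨m, hm, fun w hw => by_contra fun hwM => h w hwM hw⟩

/-- If `G` has no clique or `ℓ`-clique component, `M` is a P-vertex, and a minimum
`L`-cluster-editing set `F` with `|F| ≤ k` distributes the vertices of `M` among exactly
one `ℓ`-clique component (that is not a clique) and one or more clique components of
size at least two, then `|M| ≤ k`. -/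
theorem pVertex_split_ellClique_and_cliques [Fintype V] (ℓ k : ℕ) (hℓ : 2 ≤ ℓ)
    (G : SimpleGraph V)
    (hG : ∀ c : G.ConnectedComponent,
      ¬ (G.IsClique c.supp ∨ IsEllCliqueOn ℓ G c.supp))
    (M : Set V) (hM : ∃ v, M = twinClass G v) (hsize : 2 ≤ M.ncard)
    (hindep : ∀ x ∈ M, ∀ y ∈ M, x ≠ y → ¬ G.Adj x y)
    (F : Finset (Sym2 V)) (hF : IsEditionSet F) (hk : F.card ≤ k)
    (hL : IsLCluster ℓ (editGraph G F))
    (hmin : ∀ F' : Finset (Sym2 V), IsEditionSet F' →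
      IsLCluster ℓ (editGraph G F') → F.card ≤ F'.card)
    (hsplit : ∃ c₀ : (editGraph G F).ConnectedComponent,
      (M ∩ c₀.supp).Nonempty ∧
      IsEllCliqueOn ℓ (editGraph G F) c₀.supp ∧
      ¬ (editGraph G F).IsClique c₀.supp ∧
      (∀ c : (editGraph G F).ConnectedComponent, (M ∩ c.supp).Nonempty → c ≠ c₀ →
        (editGraph G F).IsClique c.supp ∧ 2 ≤ c.supp.ncard) ∧
      (∃ c : (editGraph G F).ConnectedComponent, c ≠ c₀ ∧ (M ∩ c.supp).Nonempty)) :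
    M.ncard ≤ k :=
  pVertex_split_ellClique_and_cliques_general ℓ k G hG M hM hindep F hF hk hL hmin hsplit
end

section
/- Let ℓ ≥ 2, let k ≥ 0 be an integer, and let G be a finite simple graph none of whose connected components is a clique or an ℓ-clique. Suppose that there exists an edition set F for G with |F| ≤ k such that G+F is an L-cluster graph, that every twin class of G consisting of pairwise false twins has size at most k+2, and that every twin class of G consisting of pairwise true twins has size at most ℓ+k+1. Then the number of vertices of G is at most 2ℓk(k+2) + 2k(ℓ+k+1); in particular, G has O(ℓk²) vertices. -/
open SimpleGraph

variable {V : Type*}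

/-! Every component of the edited graph `G + F` contains a vertex touched by `F`: a component
avoiding `F` would already be a clique or an `ℓ`-clique component of `G`. So `G + F` has at most
`2k` components. The untouched vertices of a clique component are pairwise true twins in `G`, and
those in one part of an `ℓ`-clique component are pairwise false twins, so the twin-class bounds
leave at most `ℓ(k + 2)` untouched vertices per component. -/

namespace SimpleGraph

variable {G G' : SimpleGraph V}

theorem reachable_and_mem_of_forall_adj {S : Set V}
    (hS : ∀ a ∈ S, ∀ b, G.Adj a b → G'.Adj a b ∧ b ∈ S) {a b : V} (ha : a ∈ S)
    (h : G.Reachable a b) : G'.Reachable a b ∧ b ∈ S := by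
  rw [reachable_eq_reflTransGen] at h
  induction h with
  | refl => exact ⟨Reachable.refl a, ha⟩
  | tail _ hbc ih =>
    obtain ⟨hab, hb⟩ := ih
    obtain ⟨hbc', hc⟩ := hS _ hb _ hbc
    exact ⟨hab.trans hbc'.reachable, hc⟩

theorem ConnectedComponent.exists_supp_eq_of_adj_iff (c : G'.ConnectedComponent)
    (h : ∀ a ∈ c.supp, ∀ b, G'.Adj a b ↔ G.Adj a b) :
    ∃ d : G.ConnectedComponent, d.supp = c.supp := by
  obtain ⟨v, rfl⟩ := c.exists_rep
  have hv : v ∈ (G'.connectedComponentMk v).supp := rfl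
  refine ⟨G.connectedComponentMk v, Set.ext fun w => ⟨fun hw => ?_, fun hw => ?_⟩⟩
  · refine (reachable_and_mem_of_forall_adj (G' := G') (fun a ha b hab => ?_) hv
      (ConnectedComponent.exact hw).symm).2
    have hab' := (h a ha b).mpr hab
    exact ⟨hab', ConnectedComponent.mem_supp_of_adj_mem_supp _ ha hab'⟩
  · refine ConnectedComponent.sound (reachable_and_mem_of_forall_adj (fun a ha b hab => ?_) hv
      (ConnectedComponent.exact hw).symm).1.symm
    exact ⟨(h a ha b).mp hab, ConnectedComponent.mem_supp_of_adj_mem_supp _ ha hab⟩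

theorem induce_eq_of_adj_iff {S : Set V} (h : ∀ a ∈ S, ∀ b ∈ S, G'.Adj a b ↔ G.Adj a b) :
    G'.induce S = G.induce S := by
  ext ⟨a, ha⟩ ⟨b, hb⟩
  exact h a ha b hb

end SimpleGraph

theorem isEllCliqueOn_congr {ℓ : ℕ} {G G' : SimpleGraph V} {S : Set V}
    (h : ∀ a ∈ S, ∀ b ∈ S, G'.Adj a b ↔ G.Adj a b) :
    IsEllCliqueOn ℓ G' S ↔ IsEllCliqueOn ℓ G S := by
  simp +contextual only [IsEllCliqueOn, induce_eq_of_adj_iff h, h]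

section Twins

variable {G : SimpleGraph V}

theorem IsTwinPair.adj_iff_of_mem_twinClass {u v x y : V} (huv : IsTwinPair G u v)
    (hx : x ∈ twinClass G u) (hy : y ∈ twinClass G u) (hxy : x ≠ y) :
    G.Adj x y ↔ G.Adj u v := by
  have adj_center : ∀ w ∈ twinClass G u, w ≠ u → (G.Adj u w ↔ G.Adj u v) := by
    rintro w (rfl | huw) hwu
    · exact absurd rfl hwu
    by_cases hwv : w = v
    · rw [hwv]
    have hvu : v ≠ u := huv.1.symm
    rw [G.adj_comm u w, huv.2 w hwu hwv, G.adj_comm w v, ← huw.2 v hvu (Ne.symm hwv), G.adj_comm]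
  rcases eq_or_ne x u with rfl | hxu
  · exact adj_center y hy hxy.symm
  rcases eq_or_ne y u with rfl | hyu
  · rw [adj_comm]; exact adj_center x hx hxy
  obtain rfl | hy := hy
  · exact absurd rfl hyu
  rw [← hy.2 x hxu hxy, adj_comm]
  exact adj_center x hx hxu

theorem coe_subset_twinClass_of_forall_adj_iff {U : Finset V} (P : V → Prop)
    (hU : ∀ w ∈ U, ∀ z, z ≠ w → (G.Adj z w ↔ P z)) {u : V} (hu : u ∈ U) :
    (U : Set V) ⊆ twinClass G u := by
  intro w hw
  by_cases hwu : w = u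
  · exact Or.inl hwu
  · exact Or.inr ⟨Ne.symm hwu, fun z hzu hzw => (hU u hu z hzu).trans (hU w hw z hzw).symm⟩

theorem card_le_ncard_twinClass_of_forall_adj_iff [Finite V] {U : Finset V} (P : V → Prop)
    (hU : ∀ w ∈ U, ∀ z, z ≠ w → (G.Adj z w ↔ P z)) {u v : V} (hu : u ∈ U) (hv : v ∈ U)
    (huv : u ≠ v) :
    U.card ≤ (twinClass G u).ncard ∧
      ∀ x ∈ twinClass G u, ∀ y ∈ twinClass G u, x ≠ y → (G.Adj x y ↔ P u) := by
  have hsub := coe_subset_twinClass_of_forall_adj_iff P hU hu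
  have htwin : IsTwinPair G u v := (hsub hv).resolve_left huv.symm
  refine ⟨?_, fun x hx y hy hxy => (htwin.adj_iff_of_mem_twinClass hx hy hxy).trans ?_⟩
  · rw [← Set.ncard_coe_finset]
    exact Set.ncard_le_ncard hsub
  · exact hU v hv u huv

theorem card_le_of_forall_adj_iff_of_forall [Finite V] {s : ℕ}
    (hS : ∀ C ∈ twinClasses G, (∀ x ∈ C, ∀ y ∈ C, x ≠ y → G.Adj x y) → C.ncard ≤ s)
    {U : Finset V} (P : V → Prop) (hU : ∀ w ∈ U, ∀ z, z ≠ w → (G.Adj z w ↔ P z))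
    (hUP : ∀ u ∈ U, P u) : U.card ≤ max 1 s := by
  rcases le_or_gt U.card 1 with hU1 | hU1
  · exact le_max_of_le_left hU1
  obtain ⟨u, hu, v, hv, huv⟩ := Finset.one_lt_card.mp hU1
  obtain ⟨hcard, hadj⟩ := card_le_ncard_twinClass_of_forall_adj_iff P hU hu hv huv
  exact le_max_of_le_right <| hcard.trans <|
    hS _ ⟨u, rfl⟩ fun x hx y hy hxy => (hadj x hx y hy hxy).mpr (hUP u hu)

theorem card_le_of_forall_adj_iff_of_forall_not [Finite V] {p : ℕ}
    (hP : ∀ C ∈ twinClasses G, (∀ x ∈ C, ∀ y ∈ C, x ≠ y → ¬ G.Adj x y) → C.ncard ≤ p)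
    {U : Finset V} (P : V → Prop) (hU : ∀ w ∈ U, ∀ z, z ≠ w → (G.Adj z w ↔ P z))
    (hUP : ∀ u ∈ U, ¬ P u) : U.card ≤ max 1 p := by
  rcases le_or_gt U.card 1 with hU1 | hU1
  · exact le_max_of_le_left hU1
  obtain ⟨u, hu, v, hv, huv⟩ := Finset.one_lt_card.mp hU1
  obtain ⟨hcard, hadj⟩ := card_le_ncard_twinClass_of_forall_adj_iff P hU hu hv huv
  exact le_max_of_le_right <| hcard.trans <|
    hP _ ⟨u, rfl⟩ fun x hx y hy hxy => (hadj x hx y hy hxy).not.mpr (hUP u hu)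

end Twins

section Components

variable {G G' : SimpleGraph V} {c : G'.ConnectedComponent} {U : Finset V}

theorem card_le_of_isClique_supp [Finite V] {s : ℕ}
    (hS : ∀ C ∈ twinClasses G, (∀ x ∈ C, ∀ y ∈ C, x ≠ y → G.Adj x y) → C.ncard ≤ s)
    (hc : G'.IsClique c.supp) (hU : ∀ w ∈ U, w ∈ c.supp ∧ ∀ z, G'.Adj w z ↔ G.Adj w z) :
    U.card ≤ max 1 s := by
  refine card_le_of_forall_adj_iff_of_forall hS (· ∈ c.supp) (fun w hw z hzw => ?_)
    fun u hu => (hU u hu).1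
  obtain ⟨hwc, hwadj⟩ := hU w hw
  rw [G.adj_comm, ← hwadj]
  exact ⟨c.mem_supp_of_adj_mem_supp hwc, fun hz => hc hwc hz hzw.symm⟩

theorem card_le_of_isEllCliqueOn_supp [Finite V] {ℓ p : ℕ}
    (hP : ∀ C ∈ twinClasses G, (∀ x ∈ C, ∀ y ∈ C, x ≠ y → ¬ G.Adj x y) → C.ncard ≤ p)
    (hc : IsEllCliqueOn ℓ G' c.supp) (hU : ∀ w ∈ U, w ∈ c.supp ∧ ∀ z, G'.Adj w z ↔ G.Adj w z) :
    U.card ≤ ℓ * max 1 p := by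
  classical
  obtain ⟨-, f, hf⟩ := hc
  have hpart : ∀ i, (U.filter (f · = i)).card ≤ max 1 p := by
    intro i
    refine card_le_of_forall_adj_iff_of_forall_not hP (fun z => z ∈ c.supp ∧ f z ≠ i)
      (fun w hw z hzw => ?_) fun u hu h => h.2 (Finset.mem_filter.mp hu).2
    obtain ⟨hwU, rfl⟩ := Finset.mem_filter.mp hw
    obtain ⟨hwc, hwadj⟩ := hU w hwU
    rw [G.adj_comm, ← hwadj]
    constructor
    · intro h
      have hz := c.mem_supp_of_adj_mem_supp hwc h
      exact ⟨hz, ((hf w hwc z hz hzw.symm).mp h).symm⟩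
    · rintro ⟨hz, hne⟩
      exact (hf w hwc z hz hzw.symm).mpr hne.symm
  calc U.card = ∑ i, (U.filter (f · = i)).card :=
        Finset.card_eq_sum_card_fiberwise fun _ _ => Finset.mem_univ _
    _ ≤ ∑ _i : Fin ℓ, max 1 p := Finset.sum_le_sum fun i _ => hpart i
    _ = ℓ * max 1 p := by simp

end Components

section Editing

variable [DecidableEq V]

def touched (F : Finset (Sym2 V)) : Finset V :=
  F.biUnion Sym2.toFinset

theorem card_touched_le (F : Finset (Sym2 V)) : (touched F).card ≤ 2 * F.card :=
  calc (touched F).card ≤ ∑ e ∈ F, e.toFinset.card := Finset.card_biUnion_le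
    _ ≤ ∑ _e ∈ F, 2 := Finset.sum_le_sum fun e _ => by
        rw [Sym2.card_toFinset]; split_ifs <;> omega
    _ = 2 * F.card := by rw [Finset.sum_const, smul_eq_mul, mul_comm]

theorem editGraph_adj_of_notMem_touched {G : SimpleGraph V} {F : Finset (Sym2 V)} {a : V}
    (ha : a ∉ touched F) (b : V) : (editGraph G F).Adj a b ↔ G.Adj a b := by
  have hab : s(a, b) ∉ F := fun h =>
    ha (Finset.mem_biUnion.mpr ⟨_, h, Sym2.mem_toFinset.mpr (Sym2.mem_mk_left a b)⟩)
  simp only [editGraph, fromEdgeSet_adj, Set.mem_symmDiff, mem_edgeSet, Finset.mem_coe, hab,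
    not_false_eq_true, and_true, false_and, or_false]
  exact and_iff_left_of_imp Adj.ne

theorem exists_mem_touched_of_isLCluster {ℓ : ℕ} {G : SimpleGraph V} {F : Finset (Sym2 V)}
    (hG : ∀ c : G.ConnectedComponent, ¬ (G.IsClique c.supp ∨ IsEllCliqueOn ℓ G c.supp))
    (hL : IsLCluster ℓ (editGraph G F)) (c : (editGraph G F).ConnectedComponent) :
    ∃ v ∈ c.supp, v ∈ touched F := by
  by_contra! hc
  have hagree a (ha : a ∈ c.supp) b := editGraph_adj_of_notMem_touched (G := G) (hc a ha) b
  obtain ⟨d, hd⟩ := c.exists_supp_eq_of_adj_iff hagree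
  have hagree' : ∀ a ∈ c.supp, ∀ b ∈ c.supp, (editGraph G F).Adj a b ↔ G.Adj a b :=
    fun a ha b _ => hagree a ha b
  apply hG d
  rw [hd, ← induce_eq_top, ← induce_eq_of_adj_iff hagree', induce_eq_top,
    ← isEllCliqueOn_congr hagree']
  exact hL c

end Editing

theorem card_le_add_mul_of_forall_connectedComponent [Fintype V] {G : SimpleGraph V}
    (T : Finset V) (m : ℕ) (hT : ∀ c : G.ConnectedComponent, ∃ v ∈ c.supp, v ∈ T)
    (hm : ∀ c : G.ConnectedComponent, ∀ U : Finset V, (∀ v ∈ U, v ∈ c.supp ∧ v ∉ T) →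
      U.card ≤ m) :
    Fintype.card V ≤ T.card + T.card * m := by
  classical
  have hcomp : (Finset.univ : Finset G.ConnectedComponent).card ≤ T.card :=
    Finset.card_le_card_of_surjOn G.connectedComponentMk fun c _ =>
      let ⟨v, hv, hvT⟩ := hT c
      ⟨v, hvT, hv⟩
  calc Fintype.card V = T.card + (Finset.univ \ T).card := by
        rw [add_comm, Finset.card_sdiff_add_card_eq_card (Finset.subset_univ T), Finset.card_univ]
    _ = T.card + ∑ c, ((Finset.univ \ T).filter (G.connectedComponentMk · = c)).card := by
        congr 1
        exact Finset.card_eq_sum_card_fiberwise fun _ _ => Finset.mem_univ _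
    _ ≤ T.card + ∑ _c : G.ConnectedComponent, m := by
        gcongr with c
        refine hm c _ fun v hv => ?_
        simp only [Finset.mem_filter, Finset.mem_sdiff] at hv
        exact ⟨hv.2, hv.1.2⟩
    _ ≤ T.card + T.card * m := by
        rw [Finset.sum_const, smul_eq_mul]
        gcongr

/-- Kernel size: if `G` has no clique or `ℓ`-clique component, admits an
`L`-cluster-editing set of size at most `k`, every P-class has size at most `k + 2`
and every S-class has size at most `ℓ + k + 1`, then `G` has at most
`2ℓk(k+2) + 2k(ℓ+k+1)` vertices. -/
theorem kernel_size [Fintype V] (ℓ k : ℕ) (hℓ : 2 ≤ ℓ) (G : SimpleGraph V)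
    (hG : ∀ c : G.ConnectedComponent,
      ¬ (G.IsClique c.supp ∨ IsEllCliqueOn ℓ G c.supp))
    (hex : ∃ F : Finset (Sym2 V), IsEditionSet F ∧ F.card ≤ k ∧
      IsLCluster ℓ (editGraph G F))
    (hP : ∀ C ∈ twinClasses G,
      (∀ x ∈ C, ∀ y ∈ C, x ≠ y → ¬ G.Adj x y) → C.ncard ≤ k + 2)
    (hS : ∀ C ∈ twinClasses G,
      (∀ x ∈ C, ∀ y ∈ C, x ≠ y → G.Adj x y) → C.ncard ≤ ℓ + k + 1) :
    Fintype.card V ≤ 2 * ℓ * k * (k + 2) + 2 * k * (ℓ + k + 1) := by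
  classical
  obtain ⟨F, -, hFk, hL⟩ := hex
  have hcomp : ∀ c : (editGraph G F).ConnectedComponent, ∀ U : Finset V,
      (∀ v ∈ U, v ∈ c.supp ∧ v ∉ touched F) → U.card ≤ ℓ * (k + 2) := by
    intro c U hU
    have hU' : ∀ w ∈ U, w ∈ c.supp ∧ ∀ z, (editGraph G F).Adj w z ↔ G.Adj w z :=
      fun w hw => ⟨(hU w hw).1, editGraph_adj_of_notMem_touched (hU w hw).2⟩
    rcases hL c with hc | hc
    · calc U.card ≤ max 1 (ℓ + k + 1) := card_le_of_isClique_supp hS hc hU'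
        _ ≤ ℓ * (k + 2) := by rw [max_eq_right (by omega)]; nlinarith
    · calc U.card ≤ ℓ * max 1 (k + 2) := card_le_of_isEllCliqueOn_supp hP hc hU'
        _ = ℓ * (k + 2) := by rw [max_eq_right (by omega)]
  have hV := card_le_add_mul_of_forall_connectedComponent (touched F) _
    (exists_mem_touched_of_isLCluster hG hL) hcomp
  have hT := (card_touched_le F).trans (by omega : 2 * F.card ≤ 2 * k)
  calc Fintype.card V ≤ 2 * k + 2 * k * (ℓ * (k + 2)) := by
        refine hV.trans ?_
        gcongr
    _ ≤ 2 * ℓ * k * (k + 2) + 2 * k * (ℓ + k + 1) := by nlinarith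
end
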